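/- For every quaternion q ∈ ℍ there is a unique complex number λ_q with Im(λ_q) ≥ 0 such that q is similar to λ_q (i.e., q = h⁻¹ λ_q h for some nonzero h ∈ ℍ, regarding ℂ ⊂ ℍ). -/

import Mathlib

open scoped Quaternion

/-- The embedding of `ℂ` into the quaternions `ℍ` (as the span of `1` and `i`). -/
noncomputable def complexToQuat (z : ℂ) : ℍ[ℝ] := ⟨z.re, z.im, 0, 0⟩

/-!
Conjugation preserves the real part of a quaternion and the norm of its imaginary part, and these
two numbers determine a complex number `λ` with `0 ≤ Im λ`. Conversely, two pure quaternions
`u`, `w` of equal norm satisfy `u² = w²`, so `(w + u) u = w (w + u)`: the quaternion `w + u`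
conjugates `u` to `w` whenever it is nonzero. In the remaining case `u = -w`, and for `w = r i`
the quaternion `j` does the job, since `j z = z̄ j` for every complex `z`.
-/

open scoped ComplexConjugate

theorem GroupWithZero.isConj_iff_exists_eq_inv_mul_mul {G₀ : Type*} [GroupWithZero G₀]
    {a b : G₀} : IsConj a b ↔ ∃ c : G₀, c ≠ 0 ∧ a = c⁻¹ * b * c := by
  rw [IsConj, Units.exists_iff_ne_zero (p := (SemiconjBy · a b))]
  refine exists_congr fun c => and_congr_right fun hc => ?_
  rw [mul_assoc, eq_inv_mul_iff_mul_eq₀ hc, SemiconjBy]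

theorem SemiconjBy.add_of_mul_self_eq {R : Type*} [NonUnitalNonAssocSemiring R] {u w : R}
    (h : u * u = w * w) : SemiconjBy (w + u) u w := by
  rw [SemiconjBy, add_mul, mul_add, h, add_comm]

namespace Quaternion

section CommRing

variable {R : Type*} [CommRing R] {a b : ℍ[R]}

theorem re_mul_comm (a b : ℍ[R]) : (a * b).re = (b * a).re := by
  simp only [re_mul]; ring

theorem re_eq_of_isConj (h : IsConj a b) : a.re = b.re := by
  obtain ⟨c, hc⟩ := h
  rw [(Units.eq_mul_inv_iff_mul_eq c).2 hc.symm, re_mul_comm, ← mul_assoc, Units.inv_mul,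
    one_mul]

theorem isConj_im (h : IsConj a b) : IsConj a.im b.im := by
  obtain ⟨c, hc⟩ := h
  have hre : SemiconjBy (c : ℍ[R]) (a.re : ℍ[R]) (b.re : ℍ[R]) := by
    rw [re_eq_of_isConj ⟨c, hc⟩]
    exact (coe_commute _ _).symm
  refine ⟨c, ?_⟩
  simpa only [sub_re_self] using hc.sub_right hre

theorem normSq_eq_of_isConj (h : IsConj a b) : normSq a = normSq b :=
  isConj_iff_eq.1 (normSq.toMonoidHom.map_isConj h)

theorem isConj_coe_add (r : R) (h : IsConj a b) : IsConj (r + a) (r + b) := by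
  obtain ⟨c, hc⟩ := h
  exact ⟨c, SemiconjBy.add_right (coe_commute r c).symm hc⟩

end CommRing

theorem isConj_of_re_eq_zero {R : Type*} [Field R] [LinearOrder R] [IsStrictOrderedRing R]
    {u w : ℍ[R]} (hu : u.re = 0) (hw : w.re = 0) (hnorm : normSq u = normSq w)
    (hne : w + u ≠ 0) : IsConj u w := by
  refine ⟨Units.mk0 _ hne, SemiconjBy.add_of_mul_self_eq ?_⟩
  rw [← sq, ← sq, sq_eq_neg_normSq.2 hu, sq_eq_neg_normSq.2 hw, hnorm]

theorem semiconjBy_j_coeComplex (z : ℂ) :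
    SemiconjBy (⟨0, 0, 1, 0⟩ : ℍ) (z : ℍ) ((conj z : ℂ) : ℍ) := by
  ext <;> simp [QuaternionAlgebra.mk_mul_mk, coeComplex]

theorem norm_im_eq_of_isConj {a b : ℍ} (h : IsConj a b) : ‖a.im‖ = ‖b.im‖ := by
  have := normSq_eq_of_isConj (isConj_im h)
  rwa [normSq_eq_norm_mul_self, normSq_eq_norm_mul_self,
    mul_self_inj (norm_nonneg _) (norm_nonneg _)] at this

theorem norm_im_coeComplex (z : ℂ) : ‖(z : ℍ).im‖ = |z.im| := by
  rw [← abs_norm, ← sq_eq_sq_iff_abs_eq_abs, sq, ← normSq_eq_norm_mul_self, normSq_def']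
  simp

-- The paper's `λ_q`.
noncomputable def standardEigenvalue (a : ℍ) : ℂ := ⟨a.re, ‖a.im‖⟩

theorem isConj_standardEigenvalue (a : ℍ) : IsConj a a.standardEigenvalue := by
  set z : ℂ := ⟨0, ‖a.im‖⟩
  have hz : (a.standardEigenvalue : ℍ) = a.re + z := by ext <;> simp [z, standardEigenvalue]
  suffices IsConj a.im z by simpa only [hz, re_add_im] using isConj_coe_add a.re this
  by_cases hne : (z : ℍ) + a.im = 0
  · have hj : (⟨0, 0, 1, 0⟩ : ℍ) ≠ 0 := fun h => by simpa using congrArg QuaternionAlgebra.imJ h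
    have ha : a.im = ((conj z : ℂ) : ℍ) := by
      rw [eq_neg_of_add_eq_zero_right hne]; ext <;> simp [z]
    refine ha ▸ ⟨Units.mk0 _ hj, ?_⟩
    have hj_conj := semiconjBy_j_coeComplex (conj z)
    rwa [Complex.conj_conj] at hj_conj
  · refine isConj_of_re_eq_zero (re_im a) (by simp [z]) ?_ hne
    rw [normSq_eq_norm_mul_self, normSq_def']
    simp [z, sq]

theorem isConj_coeComplex_iff {a : ℍ} {z : ℂ} (hz : 0 ≤ z.im) :
    IsConj a z ↔ z = a.standardEigenvalue := by
  refine ⟨fun h => Complex.ext ?_ ?_, fun h => h ▸ isConj_standardEigenvalue a⟩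
  · simpa [standardEigenvalue] using (re_eq_of_isConj h).symm
  · rw [standardEigenvalue, norm_im_eq_of_isConj h, norm_im_coeComplex, abs_of_nonneg hz]

end Quaternion

theorem complexToQuat_eq_coeComplex (z : ℂ) : complexToQuat z = z := rfl

open Quaternion in
/-- For every quaternion `q` there is a unique complex number `λ` with `Im(λ) ≥ 0`
such that `q` is similar to `λ`, i.e. `q = h⁻¹ λ h` for some nonzero `h ∈ ℍ`. -/
theorem quaternion_similar_unique_complex (q : ℍ[ℝ]) :
    ∃! lam : ℂ, 0 ≤ lam.im ∧
      ∃ h : ℍ[ℝ], h ≠ 0 ∧ q = h⁻¹ * complexToQuat lam * h := by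
  simp only [complexToQuat_eq_coeComplex, ← GroupWithZero.isConj_iff_exists_eq_inv_mul_mul]
  exact ⟨q.standardEigenvalue, ⟨norm_nonneg _, isConj_standardEigenvalue q⟩,
    fun lam ⟨hlam, hconj⟩ => (isConj_coeComplex_iff hlam).1 hconj⟩
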